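/- Let g be a finite-dimensional real Lie algebra with a bilinear product · satisfying x·y − y·x = ⁅x,y⁆ and L_⁅x,y⁆ = L_x ∘ L_y − L_y ∘ L_x for all x,y ∈ g (where L_x(y) = x·y), and let L*_x : g* → g* be defined by L*_x(α) = −α ∘ L_x. Then: (i) the bracket on g × g* defined by ⁅(x,α),(y,β)⁆ = (⁅x,y⁆, L*_x(β) − L*_y(α)) satisfies the Jacobi identity; (ii) the symmetric bilinear form ω((x,α),(y,β)) = α(y) + β(x) is nondegenerate; (iii) the bilinear product on g × g* defined by (x,α) ∗ (y,β) = (x·y, L*_x(β)) satisfies, for all X,Y,Z ∈ g × g*: X∗Y − Y∗X = ⁅X,Y⁆, ω(X∗Y, Z) + ω(Y, X∗Z) = 0, and 𝓛_⁅X,Y⁆ = 𝓛_X ∘ 𝓛_Y − 𝓛_Y ∘ 𝓛_X, where 𝓛_X(Y) = X∗Y. (Aubert–Medina: the cotangent bundle of a simply connected flat affine Lie group carries a left-invariant flat hyperbolic pseudo-metric of signature (n,n) with Levi-Civita connection ∇_{(x,α)⁺}(y,β)⁺ = (x·y, L*_x(β))⁺.) -/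
import Mathlib


/-- The bracket of the classical cotangent Lie algebra `g ⋉_{L*} g*` attached to a
flat affine structure `P` on `g`: `⁅(x,α),(y,β)⁆ = (⁅x,y⁆, L*_x(β) − L*_y(α))`,
where `L*_x(α) = −α ∘ L_x` and `L_x = P x`. -/
noncomputable def lsBracket (g : Type*) [LieRing g] [LieAlgebra ℝ g]
    (P : g →ₗ[ℝ] g →ₗ[ℝ] g) (X Y : g × Module.Dual ℝ g) : g × Module.Dual ℝ g :=
  (⁅X.1, Y.1⁆, -(Y.2 ∘ₗ P X.1) + X.2 ∘ₗ P Y.1)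

/-- The hyperbolic form `ω((x,α),(y,β)) = α(y) + β(x)` on `g × g*`. -/
def lsForm (g : Type*) [LieRing g] [LieAlgebra ℝ g]
    (X Y : g × Module.Dual ℝ g) : ℝ :=
  X.2 Y.1 + Y.2 X.1

/-- The Levi-Civita product `(x,α) ∗ (y,β) = (x·y, L*_x(β))` on `g × g*`. -/
noncomputable def lsProd (g : Type*) [LieRing g] [LieAlgebra ℝ g]
    (P : g →ₗ[ℝ] g →ₗ[ℝ] g) (X Y : g × Module.Dual ℝ g) : g × Module.Dual ℝ g :=
  (P X.1 Y.1, -(Y.2 ∘ₗ P X.1))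

/-- **Aubert–Medina.** For a flat affine structure `P` on a finite-dimensional real
Lie algebra `g`: (i) the cotangent bracket on `g × g*` satisfies the Jacobi
identity; (ii) the hyperbolic form `ω` is nondegenerate (and symmetric); (iii) the
product `(x,α) ∗ (y,β) = (x·y, L*_x(β))` is a flat Levi-Civita product for `ω`. -/
theorem cotangent_flat_hyperbolic
    (g : Type*) [LieRing g] [LieAlgebra ℝ g] [FiniteDimensional ℝ g]
    (P : g →ₗ[ℝ] g →ₗ[ℝ] g)
    (h1 : ∀ x y : g, P x y - P y x = ⁅x, y⁆)
    (h2 : ∀ x y : g, P ⁅x, y⁆ = P x ∘ₗ P y - P y ∘ₗ P x) :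
    (∀ X Y Z : g × Module.Dual ℝ g,
        lsBracket g P (lsBracket g P X Y) Z + lsBracket g P (lsBracket g P Y Z) X +
          lsBracket g P (lsBracket g P Z X) Y = 0) ∧
    (∀ X Y : g × Module.Dual ℝ g, lsForm g X Y = lsForm g Y X) ∧
    (∀ X : g × Module.Dual ℝ g, (∀ Y, lsForm g X Y = 0) → X = 0) ∧
    (∀ X Y : g × Module.Dual ℝ g,
        lsProd g P X Y - lsProd g P Y X = lsBracket g P X Y) ∧
    (∀ X Y Z : g × Module.Dual ℝ g,
        lsForm g (lsProd g P X Y) Z + lsForm g Y (lsProd g P X Z) = 0) ∧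
    (∀ X Y Z : g × Module.Dual ℝ g,
        lsProd g P (lsBracket g P X Y) Z =
          lsProd g P X (lsProd g P Y Z) - lsProd g P Y (lsProd g P X Z)) := by
  have key : ∀ a b c : g, ⁅⁅a,b⁆,c⁆ + ⁅⁅b,c⁆,a⁆ + ⁅⁅c,a⁆,b⁆ = 0 := by
    intro a b c
    have h := lie_jacobi a b c
    rw [(lie_skew ⁅a,b⁆ c).symm, (lie_skew ⁅b,c⁆ a).symm, (lie_skew ⁅c,a⁆ b).symm]
    have e : -⁅c,⁅a,b⁆⁆ + -⁅a,⁅b,c⁆⁆ + -⁅b,⁅c,a⁆⁆ =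
        -(⁅a,⁅b,c⁆⁆ + ⁅b,⁅c,a⁆⁆ + ⁅c,⁅a,b⁆⁆) := by abel
    rw [e, h, neg_zero]
  have h2' : ∀ x y z : g, P ⁅x, y⁆ z = P x (P y z) - P y (P x z) := by
    intro x y z
    rw [h2]; simp
  refine ⟨?_, ?_, ?_, ?_, ?_, ?_⟩
  · rintro ⟨x, α⟩ ⟨y, β⟩ ⟨z, γ⟩
    refine Prod.ext ?_ ?_
    · simp only [lsBracket, Prod.fst_add, Prod.fst_zero]
      exact key x y z
    · show _ = (0 : Module.Dual ℝ g)
      ext w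
      simp only [lsBracket, Prod.snd_add, LinearMap.add_apply, LinearMap.neg_apply,
        LinearMap.comp_apply, LinearMap.coe_comp, Function.comp_apply, map_add, map_neg,
        Prod.snd_zero, LinearMap.zero_apply, h2', map_sub]
      ring
  · rintro ⟨x, α⟩ ⟨y, β⟩
    simp [lsForm]; ring
  · rintro ⟨x, α⟩ hX
    have hα : ∀ y : g, α y = 0 := fun y => by simpa [lsForm] using hX (y, 0)
    have hx : ∀ β : Module.Dual ℝ g, β x = 0 := fun β => by
      simpa [lsForm, hα] using hX (0, β)
    have hx0 : x = 0 := (Module.forall_dual_apply_eq_zero_iff ℝ x).mp hx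
    have hα0 : α = 0 := by ext y; exact hα y
    simp [Prod.ext_iff, hx0, hα0]
  · rintro ⟨x, α⟩ ⟨y, β⟩
    refine Prod.ext ?_ ?_
    · simpa [lsProd, lsBracket] using h1 x y
    · show _ = _
      ext w
      simp [lsProd, lsBracket]
  · rintro ⟨x, α⟩ ⟨y, β⟩ ⟨z, γ⟩
    simp [lsProd, lsForm]
    ring
  · rintro ⟨x, α⟩ ⟨y, β⟩ ⟨z, γ⟩
    refine Prod.ext ?_ ?_
    · simp [lsProd, lsBracket, h2']
    · show _ = _
      ext w
      simp [lsProd, lsBracket, h2', map_sub]
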